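/- Fix ε > 0, a point (u, v, w) ∈ ℝ × ℝⁿ × ℝ, and a nonzero z ∈ ℝⁿ. Define f(β) = dist((u,v,w), F^ε_β)² for β ≥ 0. Then f is Lipschitz continuous on the interval [0, ‖z‖₂²] with Lipschitz constant √f(0) + ‖z‖₂²/2: for all β₁, β₂ ∈ [0, ‖z‖₂²], |f(β₁) − f(β₂)| ≤ (√f(0) + ‖z‖₂²/2)·|β₁ − β₂|. -/
import Mathlib

set_option maxHeartbeats 1000000

/-- The Euler-like admissible set
`F^ε_β = {(ρ, m, E) : ρ ≥ ε and E − ‖m‖₂²/(2ρ) ≥ ε + β/2}`. -/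
def Feps (n : ℕ) (ε β : ℝ) : Set (ℝ × EuclideanSpace ℝ (Fin n) × ℝ) :=
  {p | ε ≤ p.1 ∧ ε + β / 2 ≤ p.2.2 - ‖p.2.1‖ ^ 2 / (2 * p.1)}

/-- The Euclidean distance from the point `(u, v, w) ∈ ℝ × ℝⁿ × ℝ` to a set `S`,
i.e. the infimum over `p ∈ S` of the Euclidean distance from `(u, v, w)` to `p`. -/
noncomputable def distTo (n : ℕ) (u : ℝ) (v : EuclideanSpace ℝ (Fin n)) (w : ℝ)
    (S : Set (ℝ × EuclideanSpace ℝ (Fin n) × ℝ)) : ℝ :=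
  sInf ((fun p => Real.sqrt ((p.1 - u) ^ 2 + ‖p.2.1 - v‖ ^ 2 + (p.2.2 - w) ^ 2)) '' S)

section Aux

variable {n : ℕ} {ε : ℝ} (u : ℝ) (v : EuclideanSpace ℝ (Fin n)) (w : ℝ)

lemma feps_mem (β : ℝ) :
    ((ε, (0 : EuclideanSpace ℝ (Fin n)), ε + β / 2) :
      ℝ × EuclideanSpace ℝ (Fin n) × ℝ) ∈ Feps n ε β := by
  refine ⟨le_refl _, ?_⟩
  simp

lemma img_nonempty (β : ℝ) :
    ((fun p : ℝ × EuclideanSpace ℝ (Fin n) × ℝ =>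
      Real.sqrt ((p.1 - u) ^ 2 + ‖p.2.1 - v‖ ^ 2 + (p.2.2 - w) ^ 2)) '' Feps n ε β).Nonempty :=
  ⟨_, Set.mem_image_of_mem _ (feps_mem β)⟩

lemma img_bddBelow (β : ℝ) :
    BddBelow ((fun p : ℝ × EuclideanSpace ℝ (Fin n) × ℝ =>
      Real.sqrt ((p.1 - u) ^ 2 + ‖p.2.1 - v‖ ^ 2 + (p.2.2 - w) ^ 2)) '' Feps n ε β) := by
  refine ⟨0, fun x hx => ?_⟩
  obtain ⟨p, -, rfl⟩ := hx
  exact Real.sqrt_nonneg _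

lemma distTo_nonneg (β : ℝ) : 0 ≤ distTo n u v w (Feps n ε β) := by
  apply Real.sInf_nonneg
  rintro x ⟨p, -, rfl⟩
  exact Real.sqrt_nonneg _

lemma distTo_mono {β₁ β₂ : ℝ} (h : β₁ ≤ β₂) :
    distTo n u v w (Feps n ε β₁) ≤ distTo n u v w (Feps n ε β₂) := by
  apply csInf_le_csInf (img_bddBelow u v w β₁) (img_nonempty u v w β₂)
  apply Set.image_mono
  rintro p ⟨hp1, hp2⟩
  exact ⟨hp1, by linarith⟩

lemma distTo_shift {β₁ β₂ : ℝ} (h : β₁ ≤ β₂) :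
    distTo n u v w (Feps n ε β₂) ≤ distTo n u v w (Feps n ε β₁) + (β₂ - β₁) / 2 := by
  have key : distTo n u v w (Feps n ε β₂) - (β₂ - β₁) / 2 ≤ distTo n u v w (Feps n ε β₁) := by
    apply le_csInf (img_nonempty u v w β₁)
    rintro x ⟨p, ⟨hp1, hp2⟩, rfl⟩
    obtain ⟨ρ, m, E⟩ := p
    simp only at hp1 hp2 ⊢
    have ht0 : (0:ℝ) ≤ (β₂ - β₁) / 2 := by linarith
    have hq : ((ρ, m, E + (β₂ - β₁) / 2) : ℝ × EuclideanSpace ℝ (Fin n) × ℝ) ∈ Feps n ε β₂ := by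
      refine ⟨hp1, ?_⟩
      show ε + β₂ / 2 ≤ E + (β₂ - β₁) / 2 - ‖m‖ ^ 2 / (2 * ρ)
      linarith
    have h1 : distTo n u v w (Feps n ε β₂) ≤
        Real.sqrt ((ρ - u) ^ 2 + ‖m - v‖ ^ 2 + (E + (β₂ - β₁) / 2 - w) ^ 2) := by
      have := csInf_le (img_bddBelow u v w β₂) (Set.mem_image_of_mem _ hq)
      exact this
    have h2 : Real.sqrt ((ρ - u) ^ 2 + ‖m - v‖ ^ 2 + (E + (β₂ - β₁) / 2 - w) ^ 2) ≤
        Real.sqrt ((ρ - u) ^ 2 + ‖m - v‖ ^ 2 + (E - w) ^ 2) + (β₂ - β₁) / 2 := by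
      set A := (ρ - u) ^ 2 + ‖m - v‖ ^ 2 with hA
      set x := E - w with hx
      set t := (β₂ - β₁) / 2 with htdef
      have hA0 : 0 ≤ A := by positivity
      have hs0 : 0 ≤ Real.sqrt (A + x ^ 2) := Real.sqrt_nonneg _
      have hs2 : Real.sqrt (A + x ^ 2) ^ 2 = A + x ^ 2 := Real.sq_sqrt (by positivity)
      have hxs : x ≤ Real.sqrt (A + x ^ 2) := by
        calc x ≤ |x| := le_abs_self x
        _ = Real.sqrt (x ^ 2) := (Real.sqrt_sq_eq_abs x).symm
        _ ≤ Real.sqrt (A + x ^ 2) := Real.sqrt_le_sqrt (by linarith)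
      have hsq : A + (E + t - w) ^ 2 ≤ (Real.sqrt (A + x ^ 2) + t) ^ 2 := by
        have hxt : E + t - w = x + t := by rw [hx]; ring
        rw [hxt]
        nlinarith [mul_le_mul_of_nonneg_right hxs ht0]
      calc Real.sqrt (A + (E + t - w) ^ 2) ≤ Real.sqrt ((Real.sqrt (A + x ^ 2) + t) ^ 2) :=
            Real.sqrt_le_sqrt hsq
      _ = Real.sqrt (A + x ^ 2) + t := Real.sqrt_sq (by linarith)
    linarith
  linarith

lemma f_lip_abs (C : ℝ) {β₁ β₂ : ℝ} (h0 : 0 ≤ β₁) (h : β₁ ≤ β₂) (hC : β₂ ≤ C) :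
    |distTo n u v w (Feps n ε β₁) ^ 2 - distTo n u v w (Feps n ε β₂) ^ 2| ≤
      (distTo n u v w (Feps n ε 0) + C / 2) * |β₁ - β₂| := by
  set a := distTo n u v w (Feps n ε β₁) with ha
  set b := distTo n u v w (Feps n ε β₂) with hb
  set d := distTo n u v w (Feps n ε 0) with hd
  have hd0 : 0 ≤ d := distTo_nonneg u v w 0
  have hda : d ≤ a := distTo_mono u v w h0
  have hab : a ≤ b := distTo_mono u v w h
  have hba : b ≤ a + (β₂ - β₁) / 2 := distTo_shift u v w h
  have hbd : b ≤ d + β₂ / 2 := by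
    have := distTo_shift (ε := ε) (β₁ := 0) (β₂ := β₂) u v w (le_trans h0 h)
    linarith
  have habs1 : |a ^ 2 - b ^ 2| = b ^ 2 - a ^ 2 := by
    rw [abs_of_nonpos (by nlinarith)]; ring
  have habs2 : |β₁ - β₂| = β₂ - β₁ := by
    rw [abs_of_nonpos (by linarith)]; ring
  rw [habs1, habs2]
  nlinarith [mul_le_mul_of_nonneg_left hba (by linarith : (0:ℝ) ≤ a + b)]

end Aux

/-- `f(β) = dist((u,v,w), F^ε_β)²` is Lipschitz on `[0, ‖z‖₂²]` with
Lipschitz constant `√f(0) + ‖z‖₂²/2`. -/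
theorem f_lipschitz (n : ℕ) (hn : 0 < n) (ε : ℝ) (hε : 0 < ε)
    (u : ℝ) (v : EuclideanSpace ℝ (Fin n)) (w : ℝ)
    (z : EuclideanSpace ℝ (Fin n)) (hz : z ≠ 0) :
    ∀ β₁ ∈ Set.Icc (0 : ℝ) (‖z‖ ^ 2), ∀ β₂ ∈ Set.Icc (0 : ℝ) (‖z‖ ^ 2),
      |distTo n u v w (Feps n ε β₁) ^ 2 - distTo n u v w (Feps n ε β₂) ^ 2| ≤
        (Real.sqrt (distTo n u v w (Feps n ε 0) ^ 2) + ‖z‖ ^ 2 / 2) * |β₁ - β₂| := by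
  intro β₁ hβ₁ β₂ hβ₂
  have hd0 : 0 ≤ distTo n u v w (Feps n ε 0) := distTo_nonneg u v w 0
  rw [Real.sqrt_sq hd0]
  rcases le_total β₁ β₂ with hle | hle
  · exact f_lip_abs u v w (‖z‖ ^ 2) hβ₁.1 hle hβ₂.2
  · rw [abs_sub_comm (distTo n u v w (Feps n ε β₁) ^ 2), abs_sub_comm β₁]
    exact f_lip_abs u v w (‖z‖ ^ 2) hβ₂.1 hle hβ₁.2
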